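/- arXiv:1212.1913 — 2 statements merged into one kernel-verified Lean document; each statement's English description precedes it below -/
import Mathlib

section
/- Let q ≥ 2 and n ≥ 1, let F be an alphabet with q elements, and let C ⊆ F^n be a nonempty code whose distance distribution is a universally optimal quasicode (i.e., C is LP universally optimal). Then C is distance regular: for every i ∈ {0,1,…,n} and all x, y ∈ C, the number of codewords of C at Hamming distance i from x equals the number of codewords of C at Hamming distance i from y. -/
/-!
Fix a codeword `x ∈ C` and let `L_x(i)` count the codewords at distance `i` from `x`. Moving the
distance distribution `A` of `C` slightly towards `L_x` keeps it a quasicode: `L_x` has the right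
size and zeroth entry, and its Krawtchouk transform vanishes wherever that of `A` does, because
`q^n K_j(|x - y|)` is a Gram kernel, the sum over `|S| = j` and `g ∈ F^n` of products of
`∏_{i ∈ S} (q [x_i = g_i] - 1)`. Universal optimality therefore gives `E_f(A) ≤ E_f(L_x)` for every
completely monotonic `f`; as `A` is the average of the `L_x`, equality holds for every `x`. Taking
`f(i) = t^i` for `t ∈ [0, 1]` shows that the generating polynomials of `A` and `L_x` coincide.
-/

open Finset

/-- The Krawtchouk polynomial `K_k(x; n, q)` evaluated at a natural number `x`. -/
noncomputable def kraw (n q k x : ℕ) : ℝ :=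
  ∑ j ∈ Finset.range (k+1),
    (-1 : ℝ)^j * ((q : ℝ) - 1)^(k-j) * (x.choose j : ℝ) * ((n-x).choose (k-j) : ℝ)

/-- The finite difference operator `Δf(m) = f(m+1) − f(m)`. -/
def fdiff (f : ℕ → ℝ) : ℕ → ℝ := fun m => f (m+1) - f m

/-- `f` is completely monotonic on `{a, a+1, …, b}`:
`(−1)^k Δ^k f(i) ≥ 0` whenever `k ≥ 0` and `a ≤ i ≤ b − k`. -/
def CompletelyMonotonicOn (f : ℕ → ℝ) (a b : ℕ) : Prop :=
  ∀ k i, a ≤ i → i + k ≤ b → 0 ≤ (-1 : ℝ)^k * (fdiff^[k] f) i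

/-- A quasicode of length `n` and size `N` over an alphabet of size `q`,
recorded via its entries `A 0, …, A n`. -/
structure IsQuasicode (q n : ℕ) (N : ℝ) (A : ℕ → ℝ) : Prop where
  nonneg : ∀ i, i ≤ n → 0 ≤ A i
  delsarte : ∀ j, j ≤ n → 0 ≤ ∑ i ∈ Finset.range (n+1), A i * kraw n q j i
  size : ∑ i ∈ Finset.range (n+1), A i = N
  zeroth : A 0 = 1

/-- A universally optimal quasicode: a quasicode that minimizes `f`-energy
among all quasicodes of the same length and size, for every completely
monotonic potential function `f`. -/
def IsUOQuasicode (q n : ℕ) (N : ℝ) (A : ℕ → ℝ) : Prop :=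
  IsQuasicode q n N A ∧
    ∀ f : ℕ → ℝ, CompletelyMonotonicOn f 0 n →
      ∀ B : ℕ → ℝ, IsQuasicode q n N B →
        ∑ i ∈ Finset.range (n+1), f i * A i ≤ ∑ i ∈ Finset.range (n+1), f i * B i

/-- The quasicode `A` (of size `N`) is a `t`-design: `A^⊥_j = 0` for `1 ≤ j ≤ t`. -/
def IsDesign (q n t : ℕ) (A : ℕ → ℝ) : Prop :=
  ∀ j, 1 ≤ j → j ≤ t → ∑ i ∈ Finset.range (n+1), A i * kraw n q j i = 0

/-- `h : {0,…,n} → ℝ` is positive definite: its (unique) Krawtchouk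
coefficients are all nonnegative. -/
def PositiveDefinite (q n : ℕ) (h : ℕ → ℝ) : Prop :=
  ∃ c : ℕ → ℝ, (∀ j, j ≤ n → 0 ≤ c j) ∧
    ∀ i, i ≤ n → h i = ∑ j ∈ Finset.range (n+1), c j * kraw n q j i

open scoped Classical in
/-- The support of a quasicode: `{i > 0 : A i ≠ 0}`. -/
noncomputable def supp (n : ℕ) (A : ℕ → ℝ) : Finset ℕ :=
  (Finset.Icc 1 n).filter (fun i => A i ≠ 0)

/-- The `f`-potential energy of a code `C ⊆ F^n`:
`E_f(C) = (1/|C|) ∑_{x,y ∈ C, x ≠ y} f(|x−y|)`, where `|x−y|` is Hamming distance. -/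
noncomputable def energy {n : ℕ} {F : Type*} [DecidableEq F]
    (f : ℕ → ℝ) (C : Finset (Fin n → F)) : ℝ :=
  (1 / (C.card : ℝ)) * ∑ x ∈ C, ∑ y ∈ C, if x ≠ y then f (hammingDist x y) else 0

open scoped Classical in
/-- The distance distribution of a nonempty code `C ⊆ F^n`:
`A_i = (1/|C|)·#{(x,y) ∈ C² : |x−y| = i}`. -/
noncomputable def distDist {n : ℕ} {F : Type*} [DecidableEq F]
    (C : Finset (Fin n → F)) : ℕ → ℝ :=
  fun i => (1 / (C.card : ℝ)) *
    (((C ×ˢ C).filter (fun p => hammingDist p.1 p.2 = i)).card : ℝ)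

open Filter Topology

section Krawtchouk

open Polynomial

theorem coeff_prod_one_add_C_mul_X {ι R : Type*} [CommSemiring R] (s : Finset ι) (c : ι → R)
    (j : ℕ) :
    (∏ i ∈ s, (1 + C (c i) * X)).coeff j = ∑ t ∈ s.powersetCard j, ∏ i ∈ t, c i := by
  classical
  simp_rw [prod_one_add, prod_mul_distrib, prod_const, ← map_prod, finsetSum_coeff,
    coeff_C_mul_X_pow, ← sum_filter, powersetCard_eq_filter, eq_comm]

theorem coeff_one_add_C_mul_X_pow {R : Type*} [CommSemiring R] (a : R) (e r : ℕ) :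
    ((1 + C a * X) ^ e).coeff r = e.choose r * a ^ r := by
  have h := coeff_prod_one_add_C_mul_X (Finset.range e) (fun _ => a) r
  simp only [prod_const, card_range] at h
  rw [h, Finset.sum_congr rfl fun t ht => by rw [(mem_powersetCard.1 ht).2],
    sum_const, card_powersetCard, card_range, nsmul_eq_mul]

theorem kraw_hammingDist {n : ℕ} {F : Type*} [DecidableEq F] (q : ℕ) (x y : Fin n → F) (j : ℕ) :
    kraw n q j (hammingDist x y) =
      ∑ S ∈ (univ : Finset (Fin n)).powersetCard j,
        ∏ i ∈ S, ((q : ℝ) * (if x i = y i then 1 else 0) - 1) := by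
  rw [← coeff_prod_one_add_C_mul_X, ← prod_filter_not_mul_prod_filter univ (fun i => x i = y i)]
  have hdiff : ∏ i ∈ univ with ¬x i = y i, (1 + C ((q : ℝ) * (if x i = y i then 1 else 0) - 1) * X)
      = (1 + C (-1 : ℝ) * X) ^ hammingDist x y := by
    rw [hammingDist, ← prod_const]
    exact prod_congr rfl fun i hi => by simp [(mem_filter.1 hi).2]
  have hagree : ∏ i ∈ univ with x i = y i, (1 + C ((q : ℝ) * (if x i = y i then 1 else 0) - 1) * X)
      = (1 + C ((q : ℝ) - 1) * X) ^ (n - hammingDist x y) := by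
    have hcard := card_filter_add_card_filter_not (s := (univ : Finset (Fin n)))
      (fun i => x i = y i)
    rw [card_univ, Fintype.card_fin] at hcard
    have hdist : hammingDist x y = #{i | ¬x i = y i} := rfl
    rw [show n - hammingDist x y = #{i | x i = y i} by omega, ← prod_const]
    exact prod_congr rfl fun i hi => by simp [(mem_filter.1 hi).2]
  rw [hdiff, hagree, coeff_mul, Nat.sum_antidiagonal_eq_sum_range_succ_mk, kraw]
  refine sum_congr rfl fun m _ => ?_
  rw [coeff_one_add_C_mul_X_pow, coeff_one_add_C_mul_X_pow]
  ring

end Krawtchouk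

theorem sum_kernel_eq_zero_of_sum_sum_eq_zero {α β : Type*} {s : Finset α} {T : Finset β}
    {K : α → α → ℝ} (v : β → α → ℝ) (hK : ∀ x y, K x y = ∑ b ∈ T, v b x * v b y)
    (h : ∑ x ∈ s, ∑ y ∈ s, K x y = 0) (x : α) : ∑ y ∈ s, K x y = 0 := by
  have hsq : ∑ b ∈ T, (∑ y ∈ s, v b y) ^ 2 = 0 := by
    rw [← h]
    simp_rw [hK, sq, sum_mul_sum, sum_comm (s := T)]
  have hv : ∀ b ∈ T, ∑ y ∈ s, v b y = 0 := fun b hb =>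
    pow_eq_zero_iff two_ne_zero |>.1 <|
      (sum_eq_zero_iff_of_nonneg fun b _ => sq_nonneg _).1 hsq b hb
  simp_rw [hK, sum_comm (s := s), ← mul_sum]
  exact sum_eq_zero fun b hb => by rw [hv b hb, mul_zero]

theorem sum_pi_prod_apply {ι F : Type*} [Fintype ι] [DecidableEq ι] [Fintype F] (S : Finset ι)
    (ψ : ι → F → ℝ) :
    ∑ g : ι → F, ∏ i ∈ S, ψ i (g i)
      = (Fintype.card F : ℝ) ^ (Fintype.card ι - #S) * ∏ i ∈ S, ∑ c, ψ i c := by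
  have hS : #(univ.filter fun i => i ∉ S) = Fintype.card ι - #S := by
    rw [filter_not, card_sdiff_of_subset (filter_subset _ _), filter_mem_eq_inter, univ_inter,
      card_univ]
  simp_rw [← Fintype.prod_ite_mem S]
  rw [← Fintype.prod_sum (fun i c => if i ∈ S then ψ i c else 1)]
  simp_rw [sum_ite_irrel, sum_const, card_univ, nsmul_one]
  rw [prod_ite, prod_const, hS, filter_mem_eq_inter, univ_inter, mul_comm, Fintype.prod_ite_mem]

section CoordKernel

variable {F : Type*} [Fintype F] [DecidableEq F]

noncomputable def coordKernel (a b : F) : ℝ := Fintype.card F * (if a = b then 1 else 0) - 1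

theorem sum_coordKernel_mul_coordKernel (a b : F) :
    ∑ c, coordKernel a c * coordKernel b c = Fintype.card F * coordKernel a b := by
  simp only [coordKernel, sub_mul, mul_sub, mul_one, one_mul, sum_sub_distrib, ← mul_sum,
    mul_mul_mul_comm, ite_zero_mul_ite_zero, sum_ite_eq, mem_univ, if_true]
  by_cases h : a = b
  · subst h; simp
  · simp [h, Ne.symm h]

theorem sum_pi_prod_coordKernel_mul {ι : Type*} [Fintype ι] [DecidableEq ι] (S : Finset ι)
    (x y : ι → F) :
    ∑ g : ι → F, ∏ i ∈ S, coordKernel (x i) (g i) * coordKernel (y i) (g i)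
      = (Fintype.card F : ℝ) ^ Fintype.card ι * ∏ i ∈ S, coordKernel (x i) (y i) := by
  rw [sum_pi_prod_apply S fun i c => coordKernel (x i) c * coordKernel (y i) c]
  simp_rw [sum_coordKernel_mul_coordKernel, prod_mul_distrib, prod_const, ← mul_assoc, ← pow_add,
    Nat.sub_add_cancel (card_le_univ S)]

theorem pow_mul_kraw_hammingDist {n : ℕ} (x y : Fin n → F) (j : ℕ) :
    (Fintype.card F : ℝ) ^ n * kraw n (Fintype.card F) j (hammingDist x y)
      = ∑ b ∈ (univ : Finset (Fin n)).powersetCard j ×ˢ (univ : Finset (Fin n → F)),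
          (∏ i ∈ b.1, coordKernel (x i) (b.2 i)) * ∏ i ∈ b.1, coordKernel (y i) (b.2 i) := by
  simp_rw [sum_product, ← prod_mul_distrib, sum_pi_prod_coordKernel_mul, Fintype.card_fin,
    ← mul_sum, kraw_hammingDist]
  rfl

theorem sum_kraw_hammingDist_eq_zero {n : ℕ} {C : Finset (Fin n → F)} {j : ℕ}
    (h : ∑ x ∈ C, ∑ y ∈ C, kraw n (Fintype.card F) j (hammingDist x y) = 0) (x : Fin n → F) :
    ∑ y ∈ C, kraw n (Fintype.card F) j (hammingDist x y) = 0 := by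
  have hq : (Fintype.card F : ℝ) ^ n ≠ 0 := by
    rcases n with _ | n
    · simp
    · exact pow_ne_zero _ (Nat.cast_ne_zero.2 (Fintype.card_pos_iff.2 ⟨x 0⟩).ne')
  have := sum_kernel_eq_zero_of_sum_sum_eq_zero (s := C) _
    (fun x y => pow_mul_kraw_hammingDist x y j) (by simp_rw [← mul_sum, h, mul_zero]) x
  rwa [← mul_sum, mul_eq_zero, or_iff_right hq] at this

end CoordKernel

theorem eventually_nonneg_one_sub_mul_add_mul {a b : ℝ} (ha : 0 ≤ a) (hb : a = 0 → 0 ≤ b) :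
    ∀ᶠ t in 𝓝[>] (0 : ℝ), 0 ≤ (1 - t) * a + t * b := by
  rcases ha.eq_or_lt with rfl | ha
  · filter_upwards [self_mem_nhdsWithin] with t (ht : 0 < t)
    simpa using mul_nonneg ht.le (hb rfl)
  · have hcont : ContinuousAt (fun t : ℝ => (1 - t) * a + t * b) 0 := by fun_prop
    filter_upwards [nhdsWithin_le_nhds (continuousAt_const.eventually_lt hcont (by simpa using ha))]
      with t ht using ht.le

namespace IsQuasicode

variable {q n : ℕ} {N : ℝ} {A L : ℕ → ℝ}

theorem exists_pos_isQuasicode_one_sub_mul_add_mul (hA : IsQuasicode q n N A)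
    (hL_nonneg : ∀ i, i ≤ n → 0 ≤ L i) (hL_size : ∑ i ∈ range (n + 1), L i = N)
    (hL_zeroth : L 0 = 1)
    (hL_delsarte : ∀ j, j ≤ n → ∑ i ∈ range (n + 1), A i * kraw n q j i = 0 →
      0 ≤ ∑ i ∈ range (n + 1), L i * kraw n q j i) :
    ∃ t, 0 < t ∧ IsQuasicode q n N (fun i => (1 - t) * A i + t * L i) := by
  have hdelsarte : ∀ᶠ t in 𝓝[>] (0 : ℝ), ∀ j ∈ Set.Iic n,
      0 ≤ (1 - t) * ∑ i ∈ range (n + 1), A i * kraw n q j i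
        + t * ∑ i ∈ range (n + 1), L i * kraw n q j i :=
    (eventually_all_finite (Set.finite_Iic n)).2 fun j hj =>
      eventually_nonneg_one_sub_mul_add_mul (hA.delsarte j hj) (hL_delsarte j hj)
  have hsmall : ∀ᶠ t in 𝓝[>] (0 : ℝ), t < 1 :=
    nhdsWithin_le_nhds (eventually_lt_nhds zero_lt_one)
  obtain ⟨t, ⟨hdelsarte, ht1⟩, ht0⟩ :=
    ((hdelsarte.and hsmall).and (self_mem_nhdsWithin : Set.Ioi (0 : ℝ) ∈ 𝓝[>] 0)).exists
  refine ⟨t, ht0, ⟨fun i hi => ?_, fun j hj => ?_, ?_, ?_⟩⟩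
  · exact add_nonneg (mul_nonneg (sub_nonneg.2 ht1.le) (hA.nonneg i hi))
      (mul_nonneg (le_of_lt ht0) (hL_nonneg i hi))
  · simpa only [add_mul, mul_assoc, sum_add_distrib, ← mul_sum] using hdelsarte j hj
  · rw [sum_add_distrib, ← mul_sum, ← mul_sum, hA.size, hL_size]
    ring
  · rw [hA.zeroth, hL_zeroth]
    ring

end IsQuasicode

theorem IsUOQuasicode.sum_mul_le {q n : ℕ} {N : ℝ} {A L : ℕ → ℝ} (hA : IsUOQuasicode q n N A)
    (hL_nonneg : ∀ i, i ≤ n → 0 ≤ L i) (hL_size : ∑ i ∈ range (n + 1), L i = N)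
    (hL_zeroth : L 0 = 1)
    (hL_delsarte : ∀ j, j ≤ n → ∑ i ∈ range (n + 1), A i * kraw n q j i = 0 →
      0 ≤ ∑ i ∈ range (n + 1), L i * kraw n q j i)
    {f : ℕ → ℝ} (hf : CompletelyMonotonicOn f 0 n) :
    ∑ i ∈ range (n + 1), f i * A i ≤ ∑ i ∈ range (n + 1), f i * L i := by
  obtain ⟨t, ht, hB⟩ := hA.1.exists_pos_isQuasicode_one_sub_mul_add_mul hL_nonneg hL_size
    hL_zeroth hL_delsarte
  have hmix := hA.2 f hf _ hB
  simp only [mul_add, sum_add_distrib, mul_left_comm (f _), ← mul_sum] at hmix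
  exact le_of_mul_le_mul_left (by linarith) ht

theorem fdiff_iterate_pow (t : ℝ) (k : ℕ) :
    fdiff^[k] (fun i => t ^ i) = fun i => (t - 1) ^ k * t ^ i := by
  induction k with
  | zero => simp
  | succ k ih =>
    rw [Function.iterate_succ_apply', ih]
    funext i
    simp only [fdiff, pow_succ]
    ring

theorem completelyMonotonicOn_pow {t : ℝ} (h0 : 0 ≤ t) (h1 : t ≤ 1) (a b : ℕ) :
    CompletelyMonotonicOn (fun i => t ^ i) a b := by
  intro k i _ _
  rw [fdiff_iterate_pow, ← mul_assoc, ← mul_pow, neg_one_mul, neg_sub]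
  exact mul_nonneg (pow_nonneg (sub_nonneg.2 h1) k) (pow_nonneg h0 i)

open Polynomial in
theorem eq_of_forall_sum_pow_mul_eq {n : ℕ} {T : Set ℝ} (hT : T.Infinite) {r s : ℕ → ℝ}
    (h : ∀ t ∈ T, ∑ i ∈ range (n + 1), t ^ i * r i = ∑ i ∈ range (n + 1), t ^ i * s i) :
    ∀ i, i ≤ n → r i = s i := by
  set p : (ℕ → ℝ) → ℝ[X] := fun r => ∑ i ∈ range (n + 1), C (r i) * X ^ i
  have hp : p r = p s := eq_of_infinite_eval_eq _ _ <| hT.mono fun t ht => by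
    simp only [p, Set.mem_ofPred_eq, eval_finsetSum, eval_mul, eval_C, eval_pow, eval_X]
    simpa only [mul_comm (r _), mul_comm (s _)] using h t ht
  intro i hi
  simpa [p, finsetSum_coeff, coeff_C_mul_X_pow, Nat.lt_succ_iff.2 hi] using
    congrArg (coeff · i) hp

section LocalDist

variable {n : ℕ} {F : Type*} [DecidableEq F]

noncomputable def localDist (C : Finset (Fin n → F)) (x : Fin n → F) (i : ℕ) : ℝ :=
  #{z ∈ C | hammingDist x z = i}

theorem sum_localDist_mul [Fintype F] (C : Finset (Fin n → F)) (x : Fin n → F) (g : ℕ → ℝ) :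
    ∑ i ∈ range (n + 1), localDist C x i * g i = ∑ z ∈ C, g (hammingDist x z) := by
  have hmaps : ∀ z ∈ C, hammingDist x z ∈ range (n + 1) := fun z _ =>
    mem_range.2 <| Nat.lt_succ_of_le <| hammingDist_le_card_fintype.trans (Fintype.card_fin n).le
  rw [← sum_fiberwise_of_maps_to hmaps]
  refine sum_congr rfl fun i _ => ?_
  rw [sum_congr rfl fun z hz => by rw [(mem_filter.1 hz).2], sum_const, nsmul_eq_mul, localDist]

theorem sum_localDist [Fintype F] (C : Finset (Fin n → F)) (x : Fin n → F) :
    ∑ i ∈ range (n + 1), localDist C x i = #C := by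
  simpa using sum_localDist_mul C x fun _ => 1

theorem localDist_zero {C : Finset (Fin n → F)} {x : Fin n → F} (hx : x ∈ C) :
    localDist C x 0 = 1 := by
  have : {z ∈ C | hammingDist x z = 0} = {x} := by
    ext z
    simp only [mem_filter, mem_singleton, hammingDist_eq_zero]
    exact ⟨fun h => h.2.symm, by rintro rfl; exact ⟨hx, rfl⟩⟩
  rw [localDist, this, card_singleton, Nat.cast_one]

theorem card_mul_distDist (C : Finset (Fin n → F)) (i : ℕ) :
    #C * distDist C i = ∑ x ∈ C, localDist C x i := by
  rcases C.eq_empty_or_nonempty with rfl | hC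
  · simp
  have hcard : #{p ∈ C ×ˢ C | hammingDist p.1 p.2 = i}
      = ∑ x ∈ C, #{z ∈ C | hammingDist x z = i} := by
    simp only [card_filter, sum_product]
  rw [distDist, ← mul_assoc, mul_one_div_cancel (by simpa using hC.ne_empty), one_mul]
  simp only [localDist]
  exact_mod_cast hcard

theorem card_mul_sum_distDist_mul [Fintype F] (C : Finset (Fin n → F)) (g : ℕ → ℝ) :
    #C * ∑ i ∈ range (n + 1), distDist C i * g i = ∑ x ∈ C, ∑ y ∈ C, g (hammingDist x y) := by
  simp_rw [mul_sum, ← mul_assoc, card_mul_distDist, sum_mul, sum_comm (s := range (n + 1))]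
  exact sum_congr rfl fun x _ => sum_localDist_mul C x g

end LocalDist

namespace IsUOQuasicode

variable {n : ℕ} {F : Type*} [Fintype F] [DecidableEq F] {C : Finset (Fin n → F)}

theorem sum_mul_distDist_le_sum_mul_localDist
    (hUO : IsUOQuasicode (Fintype.card F) n #C (distDist C)) {x : Fin n → F} (hx : x ∈ C)
    {f : ℕ → ℝ} (hf : CompletelyMonotonicOn f 0 n) :
    ∑ i ∈ range (n + 1), f i * distDist C i ≤ ∑ i ∈ range (n + 1), f i * localDist C x i := by
  refine hUO.sum_mul_le (L := localDist C x) (fun i _ => Nat.cast_nonneg _) (sum_localDist C x)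
    (localDist_zero hx) (fun j _ hj => ?_) hf
  have hpairs : ∑ y ∈ C, ∑ z ∈ C, kraw n (Fintype.card F) j (hammingDist y z) = 0 := by
    rw [← card_mul_sum_distDist_mul, hj, mul_zero]
  rw [sum_localDist_mul, sum_kraw_hammingDist_eq_zero hpairs]

theorem localDist_eq_distDist (hUO : IsUOQuasicode (Fintype.card F) n #C (distDist C))
    {x : Fin n → F} (hx : x ∈ C) : ∀ i, i ≤ n → localDist C x i = distDist C i := by
  have henergy : ∀ f, CompletelyMonotonicOn f 0 n →
      ∑ i ∈ range (n + 1), f i * localDist C x i = ∑ i ∈ range (n + 1), f i * distDist C i := by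
    intro f hf
    have hmean : ∑ y ∈ C, ∑ i ∈ range (n + 1), f i * distDist C i
        = ∑ y ∈ C, ∑ i ∈ range (n + 1), f i * localDist C y i := by
      rw [sum_const, nsmul_eq_mul, mul_sum, sum_comm]
      refine sum_congr rfl fun i _ => ?_
      rw [← mul_sum, ← card_mul_distDist]
      ring
    exact ((sum_eq_sum_iff_of_le fun y hy =>
      hUO.sum_mul_distDist_le_sum_mul_localDist hy hf).1 hmean x hx).symm
  exact eq_of_forall_sum_pow_mul_eq (Set.Icc_infinite zero_lt_one) fun t ht =>
    henergy _ (completelyMonotonicOn_pow ht.1 ht.2 0 n)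

end IsUOQuasicode

theorem lp_uo_distance_regular_general {q n : ℕ}
    {F : Type*} [Fintype F] [DecidableEq F] (hF : Fintype.card F = q)
    (C : Finset (Fin n → F))
    (hUO : IsUOQuasicode q n (C.card : ℝ) (distDist C)) :
    ∀ i, i ≤ n → ∀ x ∈ C, ∀ y ∈ C,
      (C.filter (fun z => hammingDist x z = i)).card
        = (C.filter (fun z => hammingDist y z = i)).card := by
  subst hF
  intro i hi x hx y hy
  have hxy : localDist C x i = localDist C y i :=
    (hUO.localDist_eq_distDist hx i hi).trans (hUO.localDist_eq_distDist hy i hi).symm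
  simpa only [localDist, Nat.cast_inj] using hxy

/-- part of Theorem 1.2: an LP universally optimal code —
one whose distance distribution is a universally optimal quasicode — is
distance regular: for each `i`, every codeword has the same number of
codewords at distance `i` from it. -/
theorem lp_uo_distance_regular {q n : ℕ} (hq : 2 ≤ q) (hn : 1 ≤ n)
    {F : Type*} [Fintype F] [DecidableEq F] (hF : Fintype.card F = q)
    (C : Finset (Fin n → F)) (hC : C.Nonempty)
    (hUO : IsUOQuasicode q n (C.card : ℝ) (distDist C)) :
    ∀ i, i ≤ n → ∀ x ∈ C, ∀ y ∈ C,
      (C.filter (fun z => hammingDist x z = i)).card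
        = (C.filter (fun z => hammingDist y z = i)).card :=
  lp_uo_distance_regular_general hF C hUO
end

section
/- Let q ≥ 2 and n ≥ 1, let F be an alphabet with q elements, let C ⊆ F^n be a code with 0 < |C| < q^n, and let f : {1,…,n} → ℝ. Then (q^n − |C|)·E_f(F^n ∖ C) = |C|·E_f(C) + (q^n − 2|C|)·Σ_{k=1}^n C(n,k)(q−1)^k f(k). In particular, the complement F^n ∖ C is universally optimal among codes of size q^n − |C| if and only if C is universally optimal among codes of size |C|. -/
open Finset

/-- A code `C ⊆ F^n` is universally optimal: `E_f(C) ≤ E_f(C')` for every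
code `C'` of the same size and every completely monotonic potential
function `f : {1,…,n} → ℝ`. -/
def UniversallyOptimalCode {n : ℕ} {F : Type*} [Fintype F] [DecidableEq F]
    (C : Finset (Fin n → F)) : Prop :=
  ∀ f : ℕ → ℝ, CompletelyMonotonicOn f 1 n →
    ∀ C' : Finset (Fin n → F), C'.card = C.card → energy f C ≤ energy f C'

/-!
Zero on the diagonal, the kernel `g x y = f |x − y|` on `F^n` is symmetric and all its row sums
equal `M = ∑ₖ C(n,k) (q−1)ᵏ f(k)`, because the Hamming sphere of radius `k` has `C(n,k) (q−1)ᵏ`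
points. Writing a row sum over `F^n ∖ C` as `M` minus the row sum over `C`, once in each variable,
gives `∑_{(F^n ∖ C)²} g = ∑_{C²} g + (qⁿ − 2|C|) M`, which is the energy identity.
Complementation is a bijection from codes of size `|C|` onto codes of size `qⁿ − |C|`, and the
extra term depends on `|C|` only, so the identity transfers optimality from `C` to `F^n ∖ C`
as soon as `qⁿ − |C| > 0`, and back as soon as `|C| > 0`.
-/

section HammingSphere

variable {ι β : Type*} [Fintype ι] [DecidableEq ι] [Fintype β] [DecidableEq β]

theorem mem_piFinset_ite_iff_filter_ne_eq (x y : ι → β) (s : Finset ι) :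
    y ∈ Fintype.piFinset (fun i => if i ∈ s then ({x i}ᶜ : Finset β) else {x i}) ↔
      ({i | x i ≠ y i} : Finset ι) = s := by
  simp only [Fintype.mem_piFinset, Finset.ext_iff, mem_filter_univ]
  refine forall_congr' fun i => ?_
  by_cases hi : i ∈ s <;> simp [hi, eq_comm]

theorem card_filter_hammingDist_eq (x : ι → β) (k : ℕ) :
    #{y | hammingDist x y = k} = (Fintype.card ι).choose k * (Fintype.card β - 1) ^ k := by
  have hsphere : ({y | hammingDist x y = k} : Finset (ι → β)) = (univ.powersetCard k).biUnion
      fun s => Fintype.piFinset fun i => if i ∈ s then ({x i}ᶜ : Finset β) else {x i} := by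
    ext y
    simp only [mem_filter_univ, mem_biUnion, mem_powersetCard_univ,
      mem_piFinset_ite_iff_filter_ne_eq]
    exact ⟨fun h => ⟨_, h, rfl⟩, by rintro ⟨s, hs, rfl⟩; exact hs⟩
  have hfiber : ∀ s : Finset ι, #(Fintype.piFinset fun i =>
      if i ∈ s then ({x i}ᶜ : Finset β) else {x i}) = (Fintype.card β - 1) ^ #s := by
    intro s
    simp only [Fintype.card_piFinset, apply_ite card, card_compl, card_singleton,
      Fintype.prod_ite_mem, prod_const]
  rw [hsphere, card_biUnion, sum_congr rfl fun s hs => by rw [hfiber, mem_powersetCard_univ.mp hs],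
    sum_const, card_powersetCard, card_univ, smul_eq_mul]
  intro s _ t _ hst
  refine disjoint_left.mpr fun y hys hyt => hst ?_
  rw [← (mem_piFinset_ite_iff_filter_ne_eq x y s).mp hys,
    (mem_piFinset_ite_iff_filter_ne_eq x y t).mp hyt]

theorem sum_potential_hammingDist (f : ℕ → ℝ) (x : ι → β) :
    ∑ y, (if x ≠ y then f (hammingDist x y) else 0)
      = ∑ k ∈ Icc 1 (Fintype.card ι),
          ((Fintype.card ι).choose k : ℝ) * ((Fintype.card β : ℝ) - 1) ^ k * f k := by
  have hmaps : ∀ y ∈ ({y | x ≠ y} : Finset (ι → β)), hammingDist x y ∈ Icc 1 (Fintype.card ι) :=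
    fun y hy => mem_Icc.mpr ⟨hammingDist_pos.mpr ((mem_filter_univ y).mp hy),
      hammingDist_le_card_fintype⟩
  rw [← sum_filter, ← sum_fiberwise_of_maps_to' hmaps]
  refine sum_congr rfl fun k hk => ?_
  obtain ⟨hk1, hkn⟩ := mem_Icc.mp hk
  have hfiber : ({y ∈ {y | x ≠ y} | hammingDist x y = k} : Finset (ι → β))
      = ({y | hammingDist x y = k} : Finset (ι → β)) := by
    ext y
    simp only [mem_filter, mem_univ, true_and, ← hammingDist_pos]
    exact ⟨And.right, fun h => ⟨by omega, h⟩⟩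
  have hβ : 1 ≤ Fintype.card β := by
    obtain ⟨i⟩ := Fintype.card_pos_iff.mp (by omega : 0 < Fintype.card ι)
    exact Fintype.card_pos_iff.mpr ⟨x i⟩
  rw [hfiber, sum_const, card_filter_hammingDist_eq, nsmul_eq_mul]
  push_cast [Nat.cast_sub hβ]
  ring

end HammingSphere

theorem sum_sum_univ_sdiff_of_sum_eq {α : Type*} [Fintype α] [DecidableEq α]
    (g : α → α → ℝ) (hg : ∀ x y, g x y = g y x) {M : ℝ} (hM : ∀ x, ∑ y, g x y = M)
    (C : Finset α) :
    ∑ x ∈ univ \ C, ∑ y ∈ univ \ C, g x y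
      = ∑ x ∈ C, ∑ y ∈ C, g x y + (Fintype.card α - 2 * #C) * M := by
  have hrow : ∀ x, ∑ y ∈ univ \ C, g x y = M - ∑ y ∈ C, g x y := fun x => by
    rw [sum_sdiff_eq_sub (subset_univ C), hM]
  have hcard : (#(univ \ C) : ℝ) = Fintype.card α - #C := by
    rw [card_univ_sdiff, Nat.cast_sub (card_le_univ C)]
  calc ∑ x ∈ univ \ C, ∑ y ∈ univ \ C, g x y
      = ∑ x ∈ univ \ C, (M - ∑ y ∈ C, g x y) := sum_congr rfl fun x _ => hrow x
    _ = #(univ \ C) * M - ∑ y ∈ C, ∑ x ∈ univ \ C, g y x := by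
        rw [sum_sub_distrib, sum_const, nsmul_eq_mul, sum_comm]
        simp only [hg]
    _ = #(univ \ C) * M - ∑ y ∈ C, (M - ∑ x ∈ C, g y x) := by simp only [hrow]
    _ = _ := by
        rw [sum_sub_distrib, sum_const, nsmul_eq_mul, hcard]
        ring

section Energy

variable {n : ℕ} {F : Type*} [DecidableEq F]

theorem card_mul_energy (f : ℕ → ℝ) (C : Finset (Fin n → F)) :
    (#C : ℝ) * energy f C = ∑ x ∈ C, ∑ y ∈ C, if x ≠ y then f (hammingDist x y) else 0 := by
  rcases C.eq_empty_or_nonempty with rfl | hC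
  · simp
  · rw [energy, ← mul_assoc, mul_one_div_cancel (by exact_mod_cast hC.card_pos.ne'), one_mul]

variable [Fintype F]

theorem energy_univ_sdiff (f : ℕ → ℝ) (C : Finset (Fin n → F)) :
    ((Fintype.card F : ℝ) ^ n - #C) * energy f (univ \ C)
      = #C * energy f C + ((Fintype.card F : ℝ) ^ n - 2 * #C)
          * ∑ k ∈ Icc 1 n, (n.choose k : ℝ) * ((Fintype.card F : ℝ) - 1) ^ k * f k := by
  have hcard : (#(univ \ C) : ℝ) = (Fintype.card F : ℝ) ^ n - #C := by
    rw [card_univ_sdiff, Nat.cast_sub (card_le_univ C), Fintype.card_fun, Fintype.card_fin,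
      Nat.cast_pow]
  have hrow := sum_potential_hammingDist (ι := Fin n) (β := F) f
  rw [Fintype.card_fin] at hrow
  rw [← hcard, card_mul_energy, card_mul_energy,
    sum_sum_univ_sdiff_of_sum_eq _ (fun x y => by simp only [ne_comm, hammingDist_comm]) hrow,
    Fintype.card_fun, Fintype.card_fin, Nat.cast_pow]

theorem UniversallyOptimalCode.univ_sdiff {C : Finset (Fin n → F)}
    (hC : #C < Fintype.card F ^ n) (hopt : UniversallyOptimalCode C) :
    UniversallyOptimalCode (univ \ C) := by
  intro f hf C' hC'
  have hN : Fintype.card (Fin n → F) = Fintype.card F ^ n := by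
    rw [Fintype.card_fun, Fintype.card_fin]
  have hD : #(univ \ C') = #C := by
    rw [card_univ_sdiff, hC', card_univ_sdiff, hN]
    omega
  have hE := hopt f hf (univ \ C') hD
  have hpos : (0 : ℝ) < (Fintype.card F : ℝ) ^ n - #C := by
    rw [sub_pos]; exact_mod_cast hC
  have key := energy_univ_sdiff f (univ \ C')
  rw [sdiff_sdiff_self_left, univ_inter, hD] at key
  refine le_of_mul_le_mul_left ?_ hpos
  rw [energy_univ_sdiff, key]
  gcongr

end Energy

theorem complement_energy_identity_general {q n : ℕ}
    {F : Type*} [Fintype F] [DecidableEq F] (hF : Fintype.card F = q)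
    (C : Finset (Fin n → F)) (h0 : 0 < C.card) (h1 : C.card < q^n)
    (f : ℕ → ℝ) :
    ((q : ℝ)^n - C.card) * energy f (Finset.univ \ C)
        = (C.card : ℝ) * energy f C
          + ((q : ℝ)^n - 2 * C.card)
            * ∑ k ∈ Finset.Icc 1 n, (n.choose k : ℝ) * ((q : ℝ) - 1)^k * f k
      ∧ (UniversallyOptimalCode (Finset.univ \ C) ↔ UniversallyOptimalCode C) := by
  subst hF
  refine ⟨energy_univ_sdiff f C, fun h => ?_, UniversallyOptimalCode.univ_sdiff h1⟩
  have hcompl : #(univ \ C) < Fintype.card F ^ n := by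
    rw [card_univ_sdiff, Fintype.card_fun, Fintype.card_fin]
    omega
  simpa only [sdiff_sdiff_self_left, univ_inter] using UniversallyOptimalCode.univ_sdiff hcompl h

/-- the antiparticle symmetry of Section 7: for any code
`C ⊆ F^n` with `0 < |C| < qⁿ` and any potential function `f`,
`(qⁿ − |C|)·E_f(F^n ∖ C) = |C|·E_f(C) + (qⁿ − 2|C|)·∑_{k=1}^n C(n,k)(q−1)^k f(k)`;
in particular, `F^n ∖ C` is universally optimal iff `C` is. -/
theorem complement_energy_identity {q n : ℕ} (hq : 2 ≤ q) (hn : 1 ≤ n)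
    {F : Type*} [Fintype F] [DecidableEq F] (hF : Fintype.card F = q)
    (C : Finset (Fin n → F)) (h0 : 0 < C.card) (h1 : C.card < q^n)
    (f : ℕ → ℝ) :
    ((q : ℝ)^n - C.card) * energy f (Finset.univ \ C)
        = (C.card : ℝ) * energy f C
          + ((q : ℝ)^n - 2 * C.card)
            * ∑ k ∈ Finset.Icc 1 n, (n.choose k : ℝ) * ((q : ℝ) - 1)^k * f k
      ∧ (UniversallyOptimalCode (Finset.univ \ C) ↔ UniversallyOptimalCode C) :=
  complement_energy_identity_general hF C h0 h1 f
end
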